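/- Let k ≥ 1 and let the Manchester encoding map a binary string u = (u_1,…,u_k) to the string of length 2k obtained by replacing each bit b by the pair (b, 1−b) (so 0 ↦ 01 and 1 ↦ 10). Then the average, over all 2^k binary strings u of length k, of the number of maximal runs of the Manchester encoding of u equals (3k+1)/2 = 3k/2 + 1/2. -/

import Mathlib

/-- Positions `i ≤ j` form a maximal run of the binary string `s` of length `n`:
`s` is constant on `[i,j]`, either `i` is the first position or the preceding symbol differs,
and either `j` is the last position or the following symbol differs. -/
def IsMaxRun {n : ℕ} (s : Fin n → Bool) (i j : Fin n) : Prop :=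
  i ≤ j ∧ (∀ k : Fin n, i ≤ k → k ≤ j → s k = s i) ∧
    ((i : ℕ) = 0 ∨ ∃ i' : Fin n, (i' : ℕ) + 1 = (i : ℕ) ∧ s i' ≠ s i) ∧
    ((j : ℕ) = n - 1 ∨ ∃ j' : Fin n, (j : ℕ) + 1 = (j' : ℕ) ∧ s j' ≠ s j)

/-- The number of maximal runs of a binary string `s` (each maximal run is determined by its
unique pair of endpoints `(i, j)`). -/
noncomputable def runCount {n : ℕ} (s : Fin n → Bool) : ℕ :=
  Nat.card {p : Fin n × Fin n // IsMaxRun s p.1 p.2}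

/-- The Manchester encoding of `u = (u_1,…,u_k)`: each bit `b` is replaced by the pair
`(b, 1−b)`, so `0 ↦ 01` and `1 ↦ 10`. -/
def manchester (k : ℕ) (u : Fin k → Bool) : Fin (2 * k) → Bool := fun i =>
  if i.val % 2 = 0 then u ⟨i.val / 2, by have := i.isLt; omega⟩
  else !u ⟨i.val / 2, by have := i.isLt; omega⟩

/-! A maximal run is determined by its first position, so `runCount s` counts the positions that
are `0` or carry a different symbol than their predecessor. In the Manchester encoding of `u`
every odd position starts a run, and so does position `0`; the even position `2t` with `t ≥ 1` is
preceded by `!u (t-1)`, so it starts a run exactly when `t` does not start a run of `u`. Hence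
`runCount (manchester u) + runCount u = 2k + 1`. Averaging over `u` then only needs the average
run count `(k+1)/2` of a uniform string: each of its `k - 1` inner boundaries is a change of
symbol for exactly half of all strings. -/

open Finset

def IsRunStart {n : ℕ} (s : Fin n → Bool) (i : Fin n) : Prop :=
  (i : ℕ) = 0 ∨ ∃ i' : Fin n, (i' : ℕ) + 1 = (i : ℕ) ∧ s i' ≠ s i

instance {n : ℕ} (s : Fin n → Bool) : DecidablePred (IsRunStart s) := fun _ => by
  unfold IsRunStart; infer_instance

section Runs

variable {n : ℕ} {s : Fin n → Bool}

lemma isRunStart_of_val_eq_zero {i : Fin n} (hi : (i : ℕ) = 0) : IsRunStart s i := Or.inl hi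

lemma isRunStart_iff_of_val_add_one_eq {i j : Fin n} (hj : (j : ℕ) + 1 = i) :
    IsRunStart s i ↔ s j ≠ s i := by
  refine ⟨?_, fun hne => Or.inr ⟨j, hj, hne⟩⟩
  rintro (hi | ⟨j', hj', hne⟩)
  · omega
  · obtain rfl : j' = j := Fin.ext (by omega)
    exact hne

lemma IsMaxRun.isRunStart {i j : Fin n} (h : IsMaxRun s i j) : IsRunStart s i := h.2.2.1

lemma IsMaxRun.le {i j j' : Fin n} (h : IsMaxRun s i j) (h' : IsMaxRun s i j') : j ≤ j' := by
  by_contra! hlt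
  obtain ⟨hij', -, -, hlast | ⟨k, hk, hne⟩⟩ := h'
  · have := j.isLt
    have : (j' : ℕ) < j := hlt
    omega
  · have hkj : k ≤ j := Fin.le_def.mpr (by have : (j' : ℕ) < j := hlt; omega)
    have hik : i ≤ k := Fin.le_def.mpr (by have : (i : ℕ) ≤ j' := hij'; omega)
    exact hne ((h.2.1 k hik hkj).trans (h.2.1 j' hij' hlt.le).symm)

lemma IsMaxRun.unique {i j j' : Fin n} (h : IsMaxRun s i j) (h' : IsMaxRun s i j') : j = j' :=
  (h.le h').antisymm (h'.le h)

/-- A maximal run starting at `i` ends at the largest `j` such that `s` is constant on `[i, j]`. -/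
lemma IsRunStart.exists_isMaxRun {i : Fin n} (hi : IsRunStart s i) : ∃ j, IsMaxRun s i j := by
  let T : Finset (Fin n) := {j | i ≤ j ∧ ∀ k, i ≤ k → k ≤ j → s k = s i}
  have hiT : i ∈ T := by
    simp only [T, mem_filter, mem_univ, true_and]
    exact ⟨le_rfl, fun k hik hki => by rw [le_antisymm hki hik]⟩
  obtain ⟨j, hjT, hjmax⟩ := T.exists_max_image id ⟨i, hiT⟩
  simp only [T, mem_filter, mem_univ, true_and] at hjT
  obtain ⟨hij, hconst⟩ := hjT
  refine ⟨j, hij, hconst, hi, ?_⟩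
  by_cases hlast : (j : ℕ) = n - 1
  · exact Or.inl hlast
  refine Or.inr ⟨⟨j + 1, by omega⟩, rfl, fun heq => ?_⟩
  have hmem : (⟨j + 1, by omega⟩ : Fin n) ∈ T := by
    simp only [T, mem_filter, mem_univ, true_and]
    refine ⟨hij.trans (Fin.le_def.mpr (Nat.le_succ _)), fun k hik hkj => ?_⟩
    rcases (Fin.le_def.mp hkj).lt_or_eq with hlt | hEq
    · exact hconst k hik (Fin.le_def.mpr (Nat.lt_succ_iff.mp hlt))
    · rw [Fin.ext hEq, heq, hconst j hij le_rfl]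
  have := Fin.le_def.mp (hjmax _ hmem)
  simp at this

theorem runCount_eq_card_isRunStart (s : Fin n → Bool) : runCount s = #{i | IsRunStart s i} := by
  rw [runCount, ← Fintype.card_subtype, ← Nat.card_eq_fintype_card]
  refine Nat.card_congr (Equiv.ofBijective (fun p => ⟨p.1.1, p.2.isRunStart⟩) ⟨?_, ?_⟩)
  · rintro ⟨⟨i, j⟩, h⟩ ⟨⟨i', j'⟩, h'⟩ heq
    obtain rfl : i = i' := congrArg Subtype.val heq
    obtain rfl := h.unique h'
    rfl
  · rintro ⟨i, hi⟩
    obtain ⟨j, hj⟩ := hi.exists_isMaxRun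
    exact ⟨⟨(i, j), hj⟩, rfl⟩

end Runs

/-- Flipping the bit at `a` exchanges the strings with `s a ≠ s b` and those with `s a = s b`. -/
lemma two_mul_card_filter_ne {ι : Type*} [Fintype ι] [DecidableEq ι] {a b : ι} (hab : a ≠ b) :
    2 * #{s : ι → Bool | s a ≠ s b} = 2 ^ Fintype.card ι := by
  let flip : (ι → Bool) → (ι → Bool) := fun s => Function.update s a (!s a)
  have flip_flip (s : ι → Bool) : flip (flip s) = s := by
    simp [flip]
  have flip_ne_iff (s : ι → Bool) : flip s a ≠ flip s b ↔ ¬ s a ≠ s b := by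
    simp [flip, Function.update_of_ne hab.symm]
  have hcard : #{s : ι → Bool | s a ≠ s b} = #{s : ι → Bool | ¬ s a ≠ s b} := by
    refine card_nbij' flip flip (fun s hs => ?_) (fun s hs => ?_)
      (fun s _ => flip_flip s) (fun s _ => flip_flip s)
    all_goals simp only [coe_filter, mem_univ, true_and, Set.mem_ofPred_eq] at hs ⊢
    · rwa [flip_ne_iff, not_not]
    · rwa [← flip_flip s, flip_ne_iff, not_not] at hs
  rw [two_mul]
  nth_rewrite 2 [hcard]
  rw [card_filter_add_card_filter_not, card_univ, Fintype.card_fun, Fintype.card_bool]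

theorem two_mul_sum_runCount (m : ℕ) :
    2 * ∑ s : Fin (m + 1) → Bool, runCount s = (m + 2) * 2 ^ (m + 1) := by
  have hzero : #{s : Fin (m + 1) → Bool | IsRunStart s 0} = 2 ^ (m + 1) := by
    rw [filter_true_of_mem fun s _ => isRunStart_of_val_eq_zero rfl]
    simp
  have hsucc (i : Fin m) : 2 * #{s : Fin (m + 1) → Bool | IsRunStart s i.succ} = 2 ^ (m + 1) := by
    convert two_mul_card_filter_ne (Fin.castSucc_lt_succ (i := i)).ne using 3
    · exact filter_congr fun s _ => isRunStart_iff_of_val_add_one_eq rfl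
    · simp
  simp only [runCount_eq_card_isRunStart, card_filter]
  rw [sum_comm, Fin.sum_univ_succ]
  simp only [← card_filter]
  rw [mul_add, mul_sum, hzero]
  simp only [hsucc, sum_const, card_univ, Fintype.card_fin, smul_eq_mul]
  ring

lemma Fin.sum_univ_two_mul {M : Type*} [AddCommMonoid M] (k : ℕ) (f : Fin (2 * k) → M) :
    ∑ i, f i = ∑ t : Fin k, (f ⟨2 * t, by omega⟩ + f ⟨2 * t + 1, by omega⟩) := by
  rw [← (finProdFinEquiv.trans (finCongr (mul_comm k 2))).sum_comp, Fintype.sum_prod_type]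
  refine sum_congr rfl fun t _ => ?_
  rw [Fin.sum_univ_two]
  congr 1 <;> congr 1 <;> ext <;> simp [add_comm]

section Manchester

variable {k : ℕ} (u : Fin k → Bool)

lemma manchester_two_mul (t : Fin k) (h : 2 * (t : ℕ) < 2 * k) :
    manchester k u ⟨2 * t, h⟩ = u t := by
  simp [manchester]

lemma manchester_two_mul_add_one (t : Fin k) (h : 2 * (t : ℕ) + 1 < 2 * k) :
    manchester k u ⟨2 * t + 1, h⟩ = !u t := by
  simp [manchester, Nat.mul_add_div]

lemma isRunStart_manchester_two_mul_add_one (t : Fin k) (h : 2 * (t : ℕ) + 1 < 2 * k) :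
    IsRunStart (manchester k u) ⟨2 * t + 1, h⟩ := by
  rw [isRunStart_iff_of_val_add_one_eq (j := ⟨2 * t, by omega⟩) rfl, manchester_two_mul,
    manchester_two_mul_add_one]
  simp

lemma isRunStart_manchester_two_mul_iff {t j : Fin k} (hj : (j : ℕ) + 1 = t)
    (h : 2 * (t : ℕ) < 2 * k) :
    IsRunStart (manchester k u) ⟨2 * t, h⟩ ↔ ¬ IsRunStart u t := by
  rw [isRunStart_iff_of_val_add_one_eq (j := ⟨2 * j + 1, by omega⟩) (by simp; omega),
    isRunStart_iff_of_val_add_one_eq hj, manchester_two_mul, manchester_two_mul_add_one]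
  simp

end Manchester

theorem runCount_manchester_add_runCount (m : ℕ) (u : Fin (m + 1) → Bool) :
    runCount (manchester (m + 1) u) + runCount u = 2 * m + 3 := by
  have hzero : IsRunStart (manchester (m + 1) u) ⟨2 * (0 : Fin (m + 1)), by omega⟩ :=
    isRunStart_of_val_eq_zero (by simp)
  have hsucc (i : Fin m) :
      IsRunStart (manchester (m + 1) u) ⟨2 * i.succ, by omega⟩ ↔ ¬ IsRunStart u i.succ :=
    isRunStart_manchester_two_mul_iff u (j := i.castSucc) rfl _
  have hpair (P : Prop) [Decidable P] :
      ((if ¬ P then 1 else 0) + 1 + if P then 1 else 0) = 2 := by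
    split_ifs <;> rfl
  simp only [runCount_eq_card_isRunStart, card_filter]
  rw [Fin.sum_univ_two_mul, ← sum_add_distrib, Fin.sum_univ_succ]
  simp only [isRunStart_manchester_two_mul_add_one, hzero, hsucc, hpair, if_true,
    isRunStart_of_val_eq_zero (Fin.val_zero _), sum_const, card_univ, Fintype.card_fin,
    smul_eq_mul]
  ring

/-- The average, over all `2^k` binary information strings `u` of length `k`, of the number
of maximal runs of the Manchester encoding of `u` equals `3k/2 + 1/2`. -/
theorem stmt19 (k : ℕ) (hk : 1 ≤ k) :
    (∑ u : Fin k → Bool, (runCount (manchester k u) : ℝ)) / 2 ^ k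
      = (3 * (k : ℝ) + 1) / 2 := by
  obtain ⟨m, rfl⟩ := Nat.exists_eq_add_of_le' hk
  have hsum : ∑ u, (runCount (manchester (m + 1) u) : ℝ)
      + ∑ u : Fin (m + 1) → Bool, (runCount u : ℝ) = (2 * m + 3) * 2 ^ (m + 1) := by
    rw [← sum_add_distrib]
    simp only [← Nat.cast_add, runCount_manchester_add_runCount, sum_const, card_univ,
      Fintype.card_fun, Fintype.card_bool, Fintype.card_fin, nsmul_eq_mul]
    push_cast
    ring
  have hrandom : 2 * ∑ u : Fin (m + 1) → Bool, (runCount u : ℝ) = (m + 2) * 2 ^ (m + 1) := by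
    exact_mod_cast two_mul_sum_runCount m
  rw [div_eq_div_iff (by positivity) two_ne_zero]
  push_cast
  linear_combination 2 * hsum - hrandom
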